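/- In the Algorithm 1 setting, let F: [0,1]^n → [0,∞) be a nonnegative continuously differentiable DR-submodular function and let p₂* ∈ P. Fix an integer 1 ≤ i ≤ 1/ε and write w = y⁽ⁱ⁻¹⁾⊛z⁽ⁱ⁻¹⁾. If ⟨∇F(w)⊙(1 − z⁽ⁱ⁻¹⁾), a⁽ⁱ⁾ + b⁽ⁱ⁾⊙(1 − y⁽ⁱ⁻¹⁾)⟩ ≥ ⟨∇F(w)⊙(1 − z⁽ⁱ⁻¹⁾), y⁽ⁱ⁻¹⁾ + p₂*⊙(1 − y⁽ⁱ⁻¹⁾)⟩, then ⟨∇F(w)⊙(1 − z⁽ⁱ⁻¹⁾), a⁽ⁱ⁾ + b⁽ⁱ⁾⊙(1 − y⁽ⁱ⁻¹⁾)⟩ ≥ (1−ε)^{i−1}(1−m)·F(p₂*) − F(w) + ⟨∇F(w), y⁽ⁱ⁻¹⁾⊙(1 − z⁽ⁱ⁻¹⁾)⟩. -/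

import Mathlib

open scoped InnerProductSpace
open Pointwise

noncomputable section

/-- Vectors in `ℝ^n`, with the Euclidean (ℓ₂) norm and inner product. -/
abbrev Vec (n : ℕ) := EuclideanSpace ℝ (Fin n)

/-- Membership in the box `[0,1]^n`. -/
def inBox {n : ℕ} (x : Vec n) : Prop := ∀ j, 0 ≤ x j ∧ x j ≤ 1

/-- Coordinate-wise (Hadamard) product `x ⊙ y`. -/
def had {n : ℕ} (x y : Vec n) : Vec n := WithLp.toLp 2 (fun j => x j * y j)

/-- Coordinate-wise probabilistic sum `x ⊛ y`. -/
def psum {n : ℕ} (x y : Vec n) : Vec n := WithLp.toLp 2 (fun j => x j + y j - x j * y j)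

/-- The vector `1 - x` (coordinate-wise). -/
def oneM {n : ℕ} (x : Vec n) : Vec n := WithLp.toLp 2 (fun j => 1 - x j)

/-- ℓ∞-norm. -/
def normInf {n : ℕ} (x : Vec n) : ℝ := ⨆ j, |x j|

/-- DR-submodularity of `F : [0,1]^n → ℝ`. -/
def DRSubmodular {n : ℕ} (F : Vec n → ℝ) : Prop :=
  ∀ a b : Vec n, inBox a → inBox b → (∀ j, a j ≤ b j) →
    ∀ k : ℝ, 0 < k → ∀ i : Fin n, inBox (b + EuclideanSpace.single i k) →
      F (b + EuclideanSpace.single i k) - F b ≤ F (a + EuclideanSpace.single i k) - F a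

/-- `P` is down-closed (with respect to the domain `[0,1]^n`). -/
def downClosed {n : ℕ} (P : Set (Vec n)) : Prop :=
  ∀ x y : Vec n, (∀ j, 0 ≤ x j) → (∀ j, x j ≤ y j) → y ∈ P → x ∈ P

/-- The Algorithm 1 setting: `Q ⊆ [0,1]^n` convex, `P ⊆ [0,1]^n` down-closed convex,
`ε ∈ (0,1)` with `1/ε = N ∈ ℕ`, and sequences `y⁽ⁱ⁾, z⁽ⁱ⁾` built from `a⁽ⁱ⁾ ∈ Q`,
`b⁽ⁱ⁾ ∈ P` satisfying `a⁽ⁱ⁾ + b⁽ⁱ⁾ ⊙ (1 − y⁽ⁱ⁻¹⁾) ≤ 1`, via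
`y⁽ⁱ⁾ = (1−ε)·y⁽ⁱ⁻¹⁾ + ε·a⁽ⁱ⁾` and `z⁽ⁱ⁾ = z⁽ⁱ⁻¹⁾ + ε·(1 − z⁽ⁱ⁻¹⁾) ⊙ b⁽ⁱ⁾`. -/
structure Alg1Setting {n : ℕ} (Q P : Set (Vec n)) (ε : ℝ) (N : ℕ)
    (y z a b : ℕ → Vec n) : Prop where
  hQbox : ∀ x ∈ Q, inBox x
  hQconv : Convex ℝ Q
  hPbox : ∀ x ∈ P, inBox x
  hPconv : Convex ℝ P
  hPdown : downClosed P
  hε0 : 0 < ε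
  hε1 : ε < 1
  hεN : (N : ℝ) * ε = 1
  hy0Q : y 0 ∈ Q
  hy0min : ∀ x ∈ Q, normInf (y 0) ≤ normInf x
  hz0 : z 0 = 0
  haQ : ∀ i, 1 ≤ i → i ≤ N → a i ∈ Q
  hbP : ∀ i, 1 ≤ i → i ≤ N → b i ∈ P
  hfeas : ∀ i, 1 ≤ i → i ≤ N → ∀ j, a i j + b i j * (1 - y (i-1) j) ≤ 1
  hyrec : ∀ i, 1 ≤ i → i ≤ N → y i = (1-ε) • y (i-1) + ε • a i
  hzrec : ∀ i, 1 ≤ i → i ≤ N → z i = z (i-1) + ε • had (oneM (z (i-1))) (b i)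

/-!
Along the run `(1 - y⁽ⁱ⁾) ⊙ (1 - z⁽ⁱ⁾) ≥ (1-ε)^i (1-m)` coordinatewise, so every coordinate of
`w = y⁽ⁱ⁻¹⁾ ⊛ z⁽ⁱ⁻¹⁾` is at most `1 - c` with `c = (1-ε)^{i-1}(1-m)`. DR-submodularity makes the
gradient coordinatewise antitone, hence `F` concave along nonnegative directions. Concavity and
nonnegativity on a ray from `p₂*` give `F(w ⊛ p₂*) ≥ c F(p₂*)`, and concavity from `w` gives
`F(w ⊛ p₂*) - F(w) ≤ ⟪∇F(w), w ⊛ p₂* - w⟫`. Since `1 - w = (1 - y⁽ⁱ⁻¹⁾) ⊙ (1 - z⁽ⁱ⁻¹⁾)`, the left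
side of the hypothesis is exactly `⟪∇F(w), y⁽ⁱ⁻¹⁾ ⊙ (1 - z⁽ⁱ⁻¹⁾)⟫ + ⟪∇F(w), w ⊛ p₂* - w⟫`.
-/

open Filter Set Topology

namespace Vec

variable {n : ℕ}

@[simp] lemma had_apply (x y : Vec n) (j : Fin n) : had x y j = x j * y j := rfl

@[simp] lemma psum_apply (x y : Vec n) (j : Fin n) : psum x y j = x j + y j - x j * y j := rfl

@[simp] lemma oneM_apply (x : Vec n) (j : Fin n) : oneM x j = 1 - x j := rfl

lemma inner_eq_sum (x y : Vec n) : ⟪x, y⟫_ℝ = ∑ j, x j * y j := by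
  simp [PiLp.inner_apply, RCLike.inner_apply, mul_comm]

lemma le_psum_left {x y : Vec n} (hx : inBox x) (hy : inBox y) (j : Fin n) :
    x j ≤ psum x y j := by
  rw [psum_apply]
  nlinarith [hx j, hy j]

lemma normInf_nonneg (x : Vec n) : 0 ≤ normInf x :=
  Real.iSup_nonneg fun _ => abs_nonneg _

lemma apply_le_normInf (x : Vec n) (j : Fin n) : x j ≤ normInf x :=
  (le_abs_self _).trans <| le_ciSup (Set.finite_range fun j => |x j|).bddAbove j

lemma inner_had_oneM_add_had (g y z p : Vec n) :
    ⟪had g (oneM z), y + had p (oneM y)⟫_ℝ =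
      ⟪g, had y (oneM z)⟫_ℝ + ⟪g, psum (psum y z) p - psum y z⟫_ℝ := by
  simp only [inner_eq_sum, ← Finset.sum_add_distrib]
  refine Finset.sum_congr rfl fun j _ => ?_
  simp only [had_apply, oneM_apply, psum_apply, PiLp.add_apply, PiLp.sub_apply]
  ring

end Vec

open Vec

namespace inBox

variable {n : ℕ}

lemma psum {x y : Vec n} (hx : inBox x) (hy : inBox y) : inBox (psum x y) := fun j => by
  rw [psum_apply]
  constructor <;> nlinarith [hx j, hy j]

lemma add_smul {p d : Vec n} {T t : ℝ} (hp : inBox p) (hpT : inBox (p + T • d))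
    (ht : t ∈ Icc 0 T) : inBox (p + t • d) := by
  intro j
  have hpj := hp j
  have hpTj := hpT j
  simp only [PiLp.add_apply, PiLp.smul_apply, smul_eq_mul] at hpTj ⊢
  rcases ht.1.eq_or_lt with rfl | ht0
  · simpa using hpj
  · have hT : 0 < T := ht0.trans_le ht.2
    constructor <;> nlinarith [ht.2]

lemma normInf_le_one {x : Vec n} (hx : inBox x) : normInf x ≤ 1 := by
  rcases isEmpty_or_nonempty (Fin n) with h | h
  · simp [normInf, Real.iSup_of_isEmpty]
  · exact ciSup_le fun j => abs_le.2 ⟨by linarith [(hx j).1], (hx j).2⟩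

end inBox

lemma EuclideanSpace.smul_single_one {𝕜 ι : Type*} [RCLike 𝕜] [DecidableEq ι] (i : ι)
    (a : 𝕜) :
    a • EuclideanSpace.single i (1 : 𝕜) = EuclideanSpace.single i a := by
  ext l
  by_cases h : l = i <;> simp [h]

lemma HasGradientAt.hasDerivAt_add_smul {n : ℕ} {F : Vec n → ℝ} {g p d : Vec n} {t : ℝ}
    (h : HasGradientAt F g (p + t • d)) :
    HasDerivAt (fun s : ℝ => F (p + s • d)) ⟪g, d⟫_ℝ t := by
  have hline : HasDerivAt (fun s : ℝ => p + s • d) d t := by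
    simpa using ((hasDerivAt_id t).smul_const d).const_add p
  have hcomp := h.hasFDerivAt.comp_hasDerivAt t hline
  simp only [InnerProductSpace.toDual_apply_apply] at hcomp
  exact hcomp

namespace DRSubmodular

variable {n : ℕ} {F : Vec n → ℝ} {G : Vec n → Vec n}

/-- Both sides are limits of the difference quotients compared in the definition of
DR-submodularity; `v j < 1` leaves room for the increments. -/
lemma gradient_apply_le (hDR : DRSubmodular F)
    (hGrad : ∀ x, inBox x → HasGradientAt F (G x) x) {u v : Vec n} (hu : inBox u)
    (hv : inBox v) (huv : ∀ j, u j ≤ v j) {j : Fin n} (hvj : v j < 1) : G v j ≤ G u j := by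
  have hquot : ∀ x, inBox x →
      Tendsto (fun k : ℝ => (F (x + EuclideanSpace.single j k) - F x) / k) (𝓝[>] 0)
        (𝓝 (G x j)) := by
    intro x hx
    have hd : HasDerivAt (fun s : ℝ => F (x + s • EuclideanSpace.single j 1)) (G x j) 0 := by
      simpa [EuclideanSpace.inner_single_right] using
        HasGradientAt.hasDerivAt_add_smul (t := 0) (d := EuclideanSpace.single j 1)
          (by simpa using hGrad x hx)
    rw [hasDerivAt_iff_tendsto_slope] at hd
    refine (hd.mono_left (nhdsWithin_mono 0 fun k hk => ne_of_gt hk)).congr' ?_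
    filter_upwards with k
    rw [slope_def_field, zero_smul, add_zero, sub_zero, EuclideanSpace.smul_single_one]
  have hev : ∀ᶠ k in 𝓝[>] (0 : ℝ), (F (v + EuclideanSpace.single j k) - F v) / k ≤
      (F (u + EuclideanSpace.single j k) - F u) / k := by
    filter_upwards [Ioo_mem_nhdsGT (sub_pos.2 hvj)] with k hk
    have hbox : inBox (v + EuclideanSpace.single j k) := by
      intro l
      by_cases h : l = j
      · subst h
        simp only [PiLp.add_apply, PiLp.single_apply, if_true]
        constructor <;> linarith [hv l, hk.1, hk.2]
      · simpa [PiLp.single_apply, h] using hv l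
    exact div_le_div_of_nonneg_right (hDR u v hu hv huv k hk.1 j hbox) hk.1.le
  exact le_of_tendsto_of_tendsto (hquot v hv) (hquot u hu) hev

lemma inner_gradient_le (hDR : DRSubmodular F)
    (hGrad : ∀ x, inBox x → HasGradientAt F (G x) x) {u v d : Vec n} (hu : inBox u)
    (hv : inBox v) (huv : ∀ j, u j ≤ v j) (hd : ∀ j, 0 ≤ d j) (hlt : ∀ j, 0 < d j → v j < 1) :
    ⟪G v, d⟫_ℝ ≤ ⟪G u, d⟫_ℝ := by
  rw [inner_eq_sum, inner_eq_sum]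
  refine Finset.sum_le_sum fun j _ => ?_
  rcases (hd j).eq_or_lt with h | h
  · simp [← h]
  · exact mul_le_mul_of_nonneg_right (hDR.gradient_apply_le hGrad hu hv huv (hlt j h)) (hd j)

lemma concaveOn_add_smul (hDR : DRSubmodular F)
    (hGrad : ∀ x, inBox x → HasGradientAt F (G x) x) {p d : Vec n} {T : ℝ} (hp : inBox p)
    (hpT : inBox (p + T • d)) (hd : ∀ j, 0 ≤ d j) :
    ConcaveOn ℝ (Icc 0 T) (fun t => F (p + t • d)) := by
  have hder : ∀ t ∈ Icc 0 T,
      HasDerivAt (fun s => F (p + s • d)) ⟪G (p + t • d), d⟫_ℝ t :=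
    fun t ht => (hGrad _ (hp.add_smul hpT ht)).hasDerivAt_add_smul
  refine AntitoneOn.concaveOn_of_deriv (convex_Icc 0 T)
    (fun t ht => (hder t ht).continuousAt.continuousWithinAt) ?_ ?_ <;> rw [interior_Icc]
  · exact fun t ht => (hder t (Ioo_subset_Icc_self ht)).differentiableAt.differentiableWithinAt
  · intro s hs t ht hst
    rw [(hder t (Ioo_subset_Icc_self ht)).deriv, (hder s (Ioo_subset_Icc_self hs)).deriv]
    refine hDR.inner_gradient_le hGrad (hp.add_smul hpT (Ioo_subset_Icc_self hs))
      (hp.add_smul hpT (Ioo_subset_Icc_self ht)) (fun j => ?_) hd (fun j hdj => ?_)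
    · simp only [PiLp.add_apply, PiLp.smul_apply, smul_eq_mul]
      nlinarith [hd j]
    · have hpTj := (hpT j).2
      simp only [PiLp.add_apply, PiLp.smul_apply, smul_eq_mul] at hpTj ⊢
      nlinarith [ht.2]

lemma sub_le_inner_gradient (hDR : DRSubmodular F)
    (hGrad : ∀ x, inBox x → HasGradientAt F (G x) x) {w v : Vec n} (hw : inBox w)
    (hv : inBox v) (hwv : ∀ j, w j ≤ v j) : F v - F w ≤ ⟪G w, v - w⟫_ℝ := by
  have hv' : inBox (w + (1 : ℝ) • (v - w)) := by simpa using hv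
  have hconc := hDR.concaveOn_add_smul hGrad hw hv' fun j => by
    simpa using hwv j
  have hslope := hconc.slope_le_of_hasDerivAt (left_mem_Icc.2 zero_le_one)
    (right_mem_Icc.2 zero_le_one) zero_lt_one
    (HasGradientAt.hasDerivAt_add_smul (t := 0) (by simpa using hGrad w hw))
  simpa [slope_def_field] using hslope

/-- `t ↦ F (p + t • (x ⊙ (1 - p)))` is concave and nonnegative on `[0, 1/(1-c)]`, and
`x ⊛ p` is its value at `t = 1 = c • 0 + (1 - c) • (1 - c)⁻¹`. -/
lemma mul_le_apply_psum (hDR : DRSubmodular F)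
    (hGrad : ∀ x, inBox x → HasGradientAt F (G x) x) (hF0 : ∀ x, inBox x → 0 ≤ F x)
    {p x : Vec n} (hp : inBox p) (hx : inBox x) {c : ℝ} (hc0 : 0 ≤ c) (hc1 : c ≤ 1)
    (hxc : ∀ j, x j ≤ 1 - c) : c * F p ≤ F (psum x p) := by
  rcases hc1.eq_or_lt with rfl | hc1
  · have hx0 : psum x p = p := by
      ext j
      have : x j = 0 := le_antisymm (by linarith [hxc j]) (hx j).1
      simp [this]
    rw [hx0, one_mul]
  set T := (1 - c)⁻¹
  have hT : 0 < T := inv_pos.2 (sub_pos.2 hc1)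
  have hTx : ∀ j, T * x j ≤ 1 := fun j => by
    calc T * x j ≤ T * (1 - c) := mul_le_mul_of_nonneg_left (hxc j) hT.le
      _ = 1 := inv_mul_cancel₀ (sub_pos.2 hc1).ne'
  have hpT : inBox (p + T • had x (oneM p)) := fun j => by
    simp only [PiLp.add_apply, PiLp.smul_apply, had_apply, oneM_apply, smul_eq_mul]
    constructor <;> nlinarith [hp j, hx j, hTx j]
  have hconc := hDR.concaveOn_add_smul hGrad hp hpT fun j => by
    simp only [had_apply, oneM_apply]
    nlinarith [hp j, hx j]
  have hcomb := hconc.2 (left_mem_Icc.2 hT.le) (right_mem_Icc.2 hT.le) hc0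
    (sub_nonneg.2 hc1.le) (by ring)
  have hone : c • (0 : ℝ) + (1 - c) • T = 1 := by
    simp only [smul_eq_mul, mul_zero, zero_add]
    exact mul_inv_cancel₀ (sub_pos.2 hc1).ne'
  have hend : p + had x (oneM p) = psum x p := by
    ext j
    simp only [PiLp.add_apply, had_apply, oneM_apply, psum_apply]
    ring
  rw [hone] at hcomb
  simp only [smul_eq_mul, zero_smul, one_smul, add_zero, hend] at hcomb
  nlinarith [hF0 _ hpT]

end DRSubmodular

namespace Alg1Setting

variable {n : ℕ} {Q P : Set (Vec n)} {ε : ℝ} {N : ℕ} {y z a b : ℕ → Vec n}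

lemma y_succ_apply (H : Alg1Setting Q P ε N y z a b) {i : ℕ} (hi : i < N) (j : Fin n) :
    y (i + 1) j = (1 - ε) * y i j + ε * a (i + 1) j := by
  rw [H.hyrec (i + 1) (by omega) hi]
  rfl

lemma z_succ_apply (H : Alg1Setting Q P ε N y z a b) {i : ℕ} (hi : i < N) (j : Fin n) :
    z (i + 1) j = z i j + ε * ((1 - z i j) * b (i + 1) j) := by
  rw [H.hzrec (i + 1) (by omega) hi]
  rfl

lemma inBox_y (H : Alg1Setting Q P ε N y z a b) {i : ℕ} (hi : i ≤ N) : inBox (y i) := by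
  induction i with
  | zero => exact H.hQbox _ H.hy0Q
  | succ k ih =>
    intro j
    have hyk := ih (by omega) j
    have ha := H.hQbox _ (H.haQ (k + 1) (by omega) hi) j
    rw [H.y_succ_apply hi j]
    constructor <;> nlinarith [H.hε0, H.hε1]

lemma inBox_z (H : Alg1Setting Q P ε N y z a b) {i : ℕ} (hi : i ≤ N) : inBox (z i) := by
  induction i with
  | zero => simp [H.hz0, inBox]
  | succ k ih =>
    intro j
    have hzk := ih (by omega) j
    have hb := H.hPbox _ (H.hbP (k + 1) (by omega) hi) j
    rw [H.z_succ_apply hi j]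
    have hε0 := H.hε0
    constructor
    · nlinarith [mul_nonneg (sub_nonneg.2 hzk.2) hb.1]
    · nlinarith [mul_nonneg (sub_nonneg.2 hzk.2) (sub_nonneg.2 hb.2), H.hε1]

/-- Feasibility `a + b ⊙ (1 - y) ≤ 1` gives `1 - y' ≥ (1 - y)(1 - ε + ε b)`, while
`1 - z' = (1 - z)(1 - ε b)`, and `(1 - ε + ε b)(1 - ε b) = 1 - ε + ε² b (1 - b) ≥ 1 - ε`. -/
lemma one_sub_mul_one_sub_succ (H : Alg1Setting Q P ε N y z a b) {i : ℕ} (hi : i < N)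
    (j : Fin n) :
    (1 - ε) * ((1 - y i j) * (1 - z i j)) ≤ (1 - y (i + 1) j) * (1 - z (i + 1) j) := by
  have hε0 := H.hε0
  have hε1 := H.hε1
  have hyi := H.inBox_y hi.le j
  have hzi := H.inBox_z hi.le j
  have hb := H.hPbox _ (H.hbP (i + 1) (by omega) hi) j
  have hfeas := H.hfeas (i + 1) (by omega) hi j
  simp only [Nat.add_sub_cancel] at hfeas
  have hY : (1 - y i j) * (1 - ε + ε * b (i + 1) j) ≤ 1 - y (i + 1) j := by
    rw [H.y_succ_apply hi j]
    nlinarith [mul_le_mul_of_nonneg_left hfeas hε0.le]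
  have hZ : 1 - z (i + 1) j = (1 - z i j) * (1 - ε * b (i + 1) j) := by
    rw [H.z_succ_apply hi j]
    ring
  have hstep : 1 - ε ≤ (1 - ε + ε * b (i + 1) j) * (1 - ε * b (i + 1) j) := by
    nlinarith [mul_nonneg (mul_nonneg (sq_nonneg ε) hb.1) (sub_nonneg.2 hb.2)]
  calc (1 - ε) * ((1 - y i j) * (1 - z i j))
      ≤ ((1 - ε + ε * b (i + 1) j) * (1 - ε * b (i + 1) j)) * ((1 - y i j) * (1 - z i j)) :=
        mul_le_mul_of_nonneg_right hstep (by nlinarith [hyi.2, hzi.2])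
    _ = ((1 - y i j) * (1 - ε + ε * b (i + 1) j)) * ((1 - z i j) * (1 - ε * b (i + 1) j)) :=
        by ring
    _ ≤ (1 - y (i + 1) j) * (1 - z (i + 1) j) := by
        rw [hZ]
        exact mul_le_mul_of_nonneg_right hY
          (mul_nonneg (sub_nonneg.2 hzi.2) (by nlinarith [hb.2]))

lemma pow_mul_one_sub_normInf_le (H : Alg1Setting Q P ε N y z a b) {i : ℕ} (hi : i ≤ N)
    (j : Fin n) : (1 - ε) ^ i * (1 - normInf (y 0)) ≤ (1 - y i j) * (1 - z i j) := by
  induction i with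
  | zero =>
    simp only [pow_zero, one_mul, H.hz0, PiLp.zero_apply, sub_zero, mul_one]
    linarith [apply_le_normInf (y 0) j]
  | succ k ih =>
    calc (1 - ε) ^ (k + 1) * (1 - normInf (y 0))
        = (1 - ε) * ((1 - ε) ^ k * (1 - normInf (y 0))) := by ring
      _ ≤ (1 - ε) * ((1 - y k j) * (1 - z k j)) :=
        mul_le_mul_of_nonneg_left (ih (by omega)) (sub_nonneg.2 H.hε1.le)
      _ ≤ _ := H.one_sub_mul_one_sub_succ hi j

end Alg1Setting

theorem stmt_7_general {n : ℕ} (Q P : Set (Vec n)) (ε : ℝ) (N : ℕ) (y z a b : ℕ → Vec n)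
    (H : Alg1Setting Q P ε N y z a b)
    (F : Vec n → ℝ) (G : Vec n → Vec n)
    (hF0 : ∀ x, inBox x → 0 ≤ F x)
    (hDR : DRSubmodular F)
    (hGrad : ∀ x, inBox x → HasGradientAt F (G x) x)
    (p₂ : Vec n) (hp₂ : p₂ ∈ P)
    (m : ℝ) (hm : m = normInf (y 0))
    (i : ℕ) (hiN : i ≤ N)
    (w : Vec n) (hw : w = psum (y (i-1)) (z (i-1)))
    (hobj : ⟪had (G w) (oneM (z (i-1))), y (i-1) + had p₂ (oneM (y (i-1)))⟫_ℝ ≤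
            ⟪had (G w) (oneM (z (i-1))), a i + had (b i) (oneM (y (i-1)))⟫_ℝ) :
    (1 - ε)^(i-1) * (1 - m) * F p₂ - F w
      + ⟪G w, had (y (i-1)) (oneM (z (i-1)))⟫_ℝ
    ≤ ⟪had (G w) (oneM (z (i-1))), a i + had (b i) (oneM (y (i-1)))⟫_ℝ := by
  subst hm hw
  have hi : i - 1 ≤ N := by omega
  have hwbox := (H.inBox_y hi).psum (H.inBox_z hi)
  have hp₂box : inBox p₂ := H.hPbox _ hp₂
  have hm0 := normInf_nonneg (y 0)
  have hm1 := (H.hQbox _ H.hy0Q).normInf_le_one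
  have hpow0 : 0 ≤ (1 - ε) ^ (i - 1) := pow_nonneg (sub_nonneg.2 H.hε1.le) _
  have hpow1 : (1 - ε) ^ (i - 1) ≤ 1 := pow_le_one₀ (sub_nonneg.2 H.hε1.le) (by linarith [H.hε0])
  have hwc : ∀ j,
      psum (y (i - 1)) (z (i - 1)) j ≤ 1 - (1 - ε) ^ (i - 1) * (1 - normInf (y 0)) := fun j => by
    rw [psum_apply]
    linarith [H.pow_mul_one_sub_normInf_le hi j]
  have hlow := hDR.mul_le_apply_psum hGrad hF0 hp₂box hwbox (mul_nonneg hpow0 (sub_nonneg.2 hm1))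
    (mul_le_one₀ hpow1 (sub_nonneg.2 hm1) (by linarith)) hwc
  have hfirst := hDR.sub_le_inner_gradient hGrad hwbox (hwbox.psum hp₂box)
    (le_psum_left hwbox hp₂box)
  rw [inner_had_oneM_add_had] at hobj
  linarith

/-- Corollary 4.8 / `cor:advance_second_half` together with Lemma 4.7:
in the Algorithm 1 setting, with `F` nonnegative continuously differentiable DR-submodular
(gradient `G`), `p₂* ∈ P`, `m = ‖y⁽⁰⁾‖∞` and `w = y⁽ⁱ⁻¹⁾ ⊛ z⁽ⁱ⁻¹⁾`: if the LP value at
`(a⁽ⁱ⁾, b⁽ⁱ⁾)` is at least its value at `(y⁽ⁱ⁻¹⁾, p₂*)`, then it is at least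
`(1−ε)^{i−1}(1−m)·F(p₂*) − F(w) + ⟪∇F(w), y⁽ⁱ⁻¹⁾ ⊙ (1 − z⁽ⁱ⁻¹⁾)⟫`. -/
theorem stmt_7 {n : ℕ} (Q P : Set (Vec n)) (ε : ℝ) (N : ℕ) (y z a b : ℕ → Vec n)
    (H : Alg1Setting Q P ε N y z a b)
    (F : Vec n → ℝ) (G : Vec n → Vec n)
    (hF0 : ∀ x, inBox x → 0 ≤ F x)
    (hDR : DRSubmodular F)
    (hGrad : ∀ x, inBox x → HasGradientAt F (G x) x)
    (hGcont : ContinuousOn G {x : Vec n | inBox x})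
    (p₂ : Vec n) (hp₂ : p₂ ∈ P)
    (m : ℝ) (hm : m = normInf (y 0))
    (i : ℕ) (hi1 : 1 ≤ i) (hiN : i ≤ N)
    (w : Vec n) (hw : w = psum (y (i-1)) (z (i-1)))
    (hobj : ⟪had (G w) (oneM (z (i-1))), y (i-1) + had p₂ (oneM (y (i-1)))⟫_ℝ ≤
            ⟪had (G w) (oneM (z (i-1))), a i + had (b i) (oneM (y (i-1)))⟫_ℝ) :
    (1 - ε)^(i-1) * (1 - m) * F p₂ - F w
      + ⟪G w, had (y (i-1)) (oneM (z (i-1)))⟫_ℝ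
    ≤ ⟪had (G w) (oneM (z (i-1))), a i + had (b i) (oneM (y (i-1)))⟫_ℝ :=
  stmt_7_general Q P ε N y z a b H F G hF0 hDR hGrad p₂ hp₂ m hm i hiN w hw hobj
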